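/- arXiv:1903.03755 — 2 statements merged into one kernel-verified Lean document; each statement's English description precedes it below -/
import Mathlib

section
/- Let D ≥ 2 and n ≥ 2, and let m be the unique natural number with D^m ≤ n < D^{m+1}. Let k = D^m − ⌈(n − D^m)/(D − 1)⌉, where the ceiling is taken over the rationals. Then there exists a D-ary prefix code c on n symbols in which exactly k codewords have length m and the remaining n − k codewords have length m + 1, and whose expected length under the uniform distribution U_n equals the minimum expected length L_D(U_n). -/
/-- `P` is a probability mass function on `n` symbols: all entries positive, summing to 1. -/
def IsPMF {n : ℕ} (P : Fin n → ℝ) : Prop :=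
  (∀ i, 0 < P i) ∧ ∑ i, P i = 1

/-- `c` is a `D`-ary prefix code on `n` symbols: injective, and no codeword is a
prefix of another. -/
def IsPrefixCode {D n : ℕ} (c : Fin n → List (Fin D)) : Prop :=
  Function.Injective c ∧ ∀ i j : Fin n, i ≠ j → ¬ (c i <+: c j)

/-- Expected length of the code `c` under the PMF `P`. -/
noncomputable def expLen {D n : ℕ} (P : Fin n → ℝ) (c : Fin n → List (Fin D)) : ℝ :=
  ∑ i, P i * ((c i).length : ℝ)

/-- Minimum expected length: infimum of expected lengths over all `D`-ary prefix codes. -/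
noncomputable def minExpLen (D : ℕ) {n : ℕ} (P : Fin n → ℝ) : ℝ :=
  sInf {x : ℝ | ∃ c : Fin n → List (Fin D), IsPrefixCode c ∧ x = expLen P c}

/-- The uniform distribution on `n` symbols. -/
noncomputable def unif (n : ℕ) : Fin n → ℝ := fun _ => 1 / n

def wd (D : ℕ) (hD : 0 < D) : ℕ → ℕ → List (Fin D)
  | 0, _ => []
  | ℓ+1, v => wd D hD ℓ (v / D) ++ [⟨v % D, Nat.mod_lt v hD⟩]

lemma wd_length (D : ℕ) (hD : 0 < D) (ℓ v : ℕ) : (wd D hD ℓ v).length = ℓ := by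
  induction ℓ generalizing v with
  | zero => rfl
  | succ ℓ ih => simp [wd, ih]

lemma wd_inj (D : ℕ) (hD : 0 < D) (ℓ : ℕ) : ∀ {v w : ℕ}, v < D^ℓ → w < D^ℓ →
    wd D hD ℓ v = wd D hD ℓ w → v = w := by
  induction ℓ with
  | zero => intro v w hv hw _; simp at hv hw; omega
  | succ ℓ ih =>
    intro v w hv hw h
    simp only [wd] at h
    obtain ⟨h1, h2⟩ := List.append_inj h (by simp [wd_length])
    have hd1 : v / D < D ^ ℓ := Nat.div_lt_of_lt_mul (by rw [mul_comm, ← pow_succ]; exact hv)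
    have hd2 : w / D < D ^ ℓ := Nat.div_lt_of_lt_mul (by rw [mul_comm, ← pow_succ]; exact hw)
    have hdiv := ih hd1 hd2 h1
    have hmod : v % D = w % D := by simpa [Fin.ext_iff] using h2
    have e1 := Nat.div_add_mod v D
    have e2 := Nat.div_add_mod w D
    rw [← e1, ← e2, hdiv, hmod]

lemma kraft_nat {D n : ℕ} (c : Fin n → List (Fin D)) (hc : IsPrefixCode c)
    (L : ℕ) (hL : ∀ i, (c i).length ≤ L) :
    ∑ i, D ^ (L - (c i).length) ≤ D ^ L := by
  classical
  set f : (Σ i : Fin n, List.Vector (Fin D) (L - (c i).length)) → List.Vector (Fin D) L :=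
    fun p => ⟨c p.1 ++ p.2.1, by rw [List.length_append, p.2.2]; have := hL p.1; omega⟩ with hf
  have hinj : Function.Injective f := by
    rintro ⟨i, t⟩ ⟨j, s⟩ h
    have h' : c i ++ t.1 = c j ++ s.1 := congrArg Subtype.val h
    have hij : i = j := by
      by_contra hij
      rcases List.prefix_or_prefix_of_prefix (⟨t.1, h'⟩ : c i <+: c j ++ s.1)
        (List.prefix_append _ _) with hp | hp
      · exact hc.2 i j hij hp
      · exact hc.2 j i (Ne.symm hij) hp
    subst hij
    have hts : t = s := Subtype.ext (List.append_cancel_left h')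
    rw [hts]
  have key := Fintype.card_le_of_injective f hinj
  simpa [Fintype.card_sigma, card_vector, Fintype.card_fin] using key

lemma kraft_real {D n : ℕ} (hD : 2 ≤ D) (c : Fin n → List (Fin D)) (hc : IsPrefixCode c) :
    ∑ i, ((D : ℝ)) ^ (-((c i).length : ℤ)) ≤ 1 := by
  classical
  have hD0 : (0 : ℝ) < D := by exact_mod_cast (by omega : 0 < D)
  have hD0' : (D : ℝ) ≠ 0 := ne_of_gt hD0
  set L := Finset.univ.sup (fun i : Fin n => (c i).length) with hLdef
  have hL : ∀ i, (c i).length ≤ L :=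
    fun i => Finset.le_sup (f := fun i : Fin n => (c i).length) (Finset.mem_univ i)
  have hnat := kraft_nat c hc L hL
  have hreal : ∑ i, ((D:ℝ)) ^ (L : ℤ) * ((D:ℝ)) ^ (-((c i).length : ℤ)) ≤ ((D:ℝ)) ^ (L : ℤ) := by
    have hcast : ((∑ i, D ^ (L - (c i).length) : ℕ) : ℝ) ≤ ((D ^ L : ℕ) : ℝ) := by
      exact_mod_cast hnat
    push_cast at hcast
    calc ∑ i, ((D:ℝ)) ^ (L : ℤ) * ((D:ℝ)) ^ (-((c i).length : ℤ))
        = ∑ i, ((D:ℝ)) ^ ((L - (c i).length : ℕ) : ℤ) := by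
          apply Finset.sum_congr rfl
          intro i _
          rw [← zpow_add₀ hD0']
          congr 1
          have := hL i
          omega
      _ ≤ ((D:ℝ)) ^ (L : ℤ) := by
          rw [zpow_natCast]
          calc ∑ i, ((D:ℝ)) ^ ((L - (c i).length : ℕ) : ℤ)
              = ∑ i, ((D:ℝ)) ^ ((L - (c i).length : ℕ)) := by
                apply Finset.sum_congr rfl; intro i _; rw [zpow_natCast]
            _ ≤ (D:ℝ) ^ L := hcast
  rw [← Finset.mul_sum] at hreal
  have hpow : (0:ℝ) < ((D:ℝ)) ^ (L : ℤ) := zpow_pos hD0 _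
  by_contra hcon
  push_neg at hcon
  have := mul_lt_mul_of_pos_left hcon hpow
  rw [mul_one] at this
  linarith

lemma bern (x : ℝ) (hx : 2 ≤ x) (t : ℤ) : (x - 1) * t ≤ x ^ t - 1 := by
  rcases le_or_gt 0 t with ht | ht
  · lift t to ℕ using ht
    rw [zpow_natCast]
    have h := one_add_mul_le_pow (a := x - 1) (by linarith) t
    have hx1 : 1 + (x - 1) = x := by ring
    rw [hx1] at h
    push_cast
    linarith
  · have h1 : (0:ℝ) < x ^ t := zpow_pos (by linarith) t
    have h2 : (t : ℝ) ≤ -1 := by exact_mod_cast (by omega : t ≤ -1)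
    nlinarith [mul_nonpos_of_nonneg_of_nonpos (by linarith : (0:ℝ) ≤ x - 2) (by linarith : (t:ℝ) ≤ 0)]

lemma k_facts (D n m k : ℕ) (hD : 2 ≤ D)
    (hm : D ^ m ≤ n) (hm' : n < D ^ (m + 1))
    (hk : k = D ^ m - (⌈((n - D ^ m : ℕ) : ℚ) / ((D : ℚ) - 1)⌉).toNat) :
    k ≤ D ^ m ∧ ((D:ℤ) - 1) * k ≤ (D:ℤ) ^ (m+1) - n ∧ (D:ℤ) ^ (m+1) - n < ((D:ℤ) - 1) * (k + 1) := by
  set d : ℕ := D - 1 with hd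
  set a : ℕ := n - D ^ m with ha
  have hd0 : 0 < d := by omega
  set Q : ℕ := (a + d - 1) / d with hQ
  set r : ℕ := (a + d - 1) % d with hr
  have h1 : d * Q + r = a + d - 1 := Nat.div_add_mod _ _
  have h2 : r < d := Nat.mod_lt _ hd0
  zify [show (1:ℕ) ≤ a + d from by omega] at h1
  have hz2 : (r : ℤ) < d := by exact_mod_cast h2
  have hr0 : (0:ℤ) ≤ (r:ℤ) := Int.ofNat_nonneg _
  have key1 : (a : ℤ) ≤ d * Q := by linarith
  have key2 : (d : ℤ) * Q < a + d := by linarith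
  have hdq : ((d : ℚ)) > 0 := by exact_mod_cast hd0
  have hceil : ⌈((a : ℕ) : ℚ) / ((D : ℚ) - 1)⌉ = (Q : ℤ) := by
    have hDd : ((D : ℚ) - 1) = (d : ℚ) := by
      push_cast [hd, Nat.cast_sub (by omega : 1 ≤ D)]
      ring
    rw [hDd, Int.ceil_eq_iff]
    have key2' : (d : ℚ) * Q < a + d := by exact_mod_cast key2
    have key1' : (a : ℚ) ≤ d * Q := by exact_mod_cast key1
    constructor
    · rw [lt_div_iff₀ hdq]
      push_cast
      linarith
    · rw [div_le_iff₀ hdq]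
      push_cast
      linarith
  have hkQ : k = D ^ m - Q := by rw [hk, hceil, Int.toNat_natCast]
  have haz : (a : ℤ) = n - D ^ m := by push_cast [ha, Nat.cast_sub hm]; ring
  have hdz : (d : ℤ) = (D:ℤ) - 1 := by push_cast [hd, Nat.cast_sub (by omega : 1 ≤ D)]; ring
  have hpow : ((D:ℤ)) ^ (m+1) = (D:ℤ) ^ m * D := by ring
  have hmz : (n : ℤ) < (D:ℤ) ^ m * D := by
    have : (n:ℤ) < (D:ℤ)^(m+1) := by exact_mod_cast hm'
    linarith [hpow]
  have e2 : (d:ℤ) * Q = (Q:ℤ) * D - Q := by rw [hdz]; ring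
  have hQm : Q ≤ D ^ m := by
    by_contra hcon
    push_neg at hcon
    have hcon' : ((D:ℤ)^m + 1) ≤ (Q:ℤ) := by exact_mod_cast hcon
    have hmul : (d:ℤ) * ((D:ℤ)^m + 1) ≤ (d:ℤ) * Q :=
      mul_le_mul_of_nonneg_left hcon' (by positivity)
    have e4 : (d:ℤ) * ((D:ℤ)^m + 1) = (D:ℤ)^m * D - (D:ℤ)^m + D - 1 := by rw [hdz]; ring
    linarith
  have hkz : (k : ℤ) = (D:ℤ)^m - Q := by rw [hkQ]; push_cast [Nat.cast_sub hQm]; ring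
  have e1 : ((D:ℤ) - 1) * k = (D:ℤ)^m * D - (D:ℤ)^m - (Q:ℤ)*D + Q := by rw [hkz]; ring
  have e3 : ((D:ℤ) - 1) * (k + 1) = (D:ℤ)^m * D - (D:ℤ)^m - (Q:ℤ)*D + Q + D - 1 := by
    rw [hkz]; ring
  refine ⟨by omega, by linarith, by linarith⟩

/-- With D^m ≤ n < D^(m+1) and k = D^m − ⌈(n − D^m)/(D − 1)⌉, there is
a D-ary prefix code with exactly k codewords of length m and n − k of length m + 1
whose expected length under U_n equals L_D(U_n). -/
theorem stmt_8 (D n m : ℕ) (hD : 2 ≤ D) (hn : 2 ≤ n)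
    (hm : D ^ m ≤ n) (hm' : n < D ^ (m + 1))
    (k : ℕ) (hk : k = D ^ m - (⌈((n - D ^ m : ℕ) : ℚ) / ((D : ℚ) - 1)⌉).toNat) :
    ∃ c : Fin n → List (Fin D), IsPrefixCode c ∧
      (Finset.univ.filter (fun i : Fin n => (c i).length = m)).card = k ∧
      (Finset.univ.filter (fun i : Fin n => (c i).length = m + 1)).card = n - k ∧
      expLen (unif n) c = minExpLen D (unif n) := by
  classical
  obtain ⟨hkm, hA, hB⟩ := k_facts D n m k hD hm hm' hk
  have hDpos : 0 < D := by omega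
  have hkn : k ≤ n := le_trans hkm hm
  have hn0 : (0:ℝ) < n := by exact_mod_cast (by omega : 0 < n)
  have hD0 : (0 : ℝ) < D := by exact_mod_cast hDpos
  have hD0' : (D : ℝ) ≠ 0 := ne_of_gt hD0
  set c : Fin n → List (Fin D) := fun i =>
    if (i : ℕ) < k then wd D hDpos m (i:ℕ) else wd D hDpos (m+1) (k * D + ((i:ℕ) - k)) with hcdef
  have hvm : ∀ i : Fin n, (i:ℕ) < k → (i:ℕ) < D ^ m := fun i hi => lt_of_lt_of_le hi hkm
  have hw_lt : ∀ i : Fin n, ¬ (i:ℕ) < k → k * D + ((i:ℕ) - k) < D ^ (m+1) := by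
    intro i hi
    push_neg at hi
    have hin : (i:ℕ) < n := i.2
    have hz : ((k * D + ((i:ℕ) - k) : ℕ) : ℤ) < (D:ℤ)^(m+1) := by
      push_cast [Nat.cast_sub hi]
      have h1 : ((i:ℕ):ℤ) < (n:ℤ) := by exact_mod_cast hin
      linarith [hA]
    exact_mod_cast hz
  have hclen : ∀ i : Fin n, (c i).length = if (i:ℕ) < k then m else m+1 := by
    intro i
    by_cases hi : (i:ℕ) < k <;> simp [hcdef, hi, wd_length]
  have hpf : ∀ i j : Fin n, i ≠ j → ¬ (c i <+: c j) := by
    intro i j hij hp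
    by_cases hi : (i:ℕ) < k <;> by_cases hj : (j:ℕ) < k
    · have hlen : (c i).length = (c j).length := by rw [hclen i, hclen j, if_pos hi, if_pos hj]
      have heq : wd D hDpos m (i:ℕ) = wd D hDpos m (j:ℕ) := by
        simpa [hcdef, hi, hj] using hp.eq_of_length hlen
      exact hij (Fin.ext (wd_inj D hDpos m (hvm i hi) (hvm j hj) heq))
    · have hj' := hw_lt j hj
      set w := k * D + ((j:ℕ) - k) with hwdef
      have hwd : w / D < D ^ m := Nat.div_lt_of_lt_mul (by rw [mul_comm, ← pow_succ]; exact hj')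
      have hkw : k ≤ w / D := (Nat.le_div_iff_mul_le hDpos).mpr (Nat.le_add_right _ _)
      have hcj : c j = wd D hDpos m (w / D) ++ [⟨w % D, Nat.mod_lt w hDpos⟩] := by
        simp [hcdef, hj, wd, hwdef]
      have hci : c i = wd D hDpos m (i:ℕ) := by simp [hcdef, hi]
      rw [hci, hcj] at hp
      have hpre : wd D hDpos m (i:ℕ) <+: wd D hDpos m (w / D) :=
        List.prefix_of_prefix_length_le hp (List.prefix_append _ _) (by simp [wd_length])
      have heq := hpre.eq_of_length (by simp [wd_length])
      have hiw := wd_inj D hDpos m (hvm i hi) hwd heq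
      rw [← hiw] at hkw
      omega
    · have hle := hp.length_le
      rw [hclen i, hclen j, if_neg hi, if_pos hj] at hle
      omega
    · have hlen : (c i).length = (c j).length := by rw [hclen i, hclen j, if_neg hi, if_neg hj]
      have heq : wd D hDpos (m+1) (k * D + ((i:ℕ) - k)) = wd D hDpos (m+1) (k * D + ((j:ℕ) - k)) := by
        simpa [hcdef, hi, hj] using hp.eq_of_length hlen
      have := wd_inj D hDpos (m+1) (hw_lt i hi) (hw_lt j hj) heq
      have : (i:ℕ) = (j:ℕ) := by omega
      exact hij (Fin.ext this)
  have hinj : Function.Injective c := by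
    intro i j h
    by_contra hij
    exact hpf i j hij (by rw [h])
  have hc : IsPrefixCode c := ⟨hinj, hpf⟩
  -- cardinalities
  have hcard1 : (Finset.univ.filter (fun i : Fin n => (i:ℕ) < k)).card = k := by
    have hmap : Finset.univ.filter (fun i : Fin n => (i:ℕ) < k)
        = Finset.map (Fin.castLEEmb hkn) Finset.univ := by
      ext i
      simp only [Finset.mem_filter, Finset.mem_univ, true_and, Finset.mem_map]
      constructor
      · intro hi
        exact ⟨⟨(i:ℕ), hi⟩, by ext; simp⟩
      · rintro ⟨a, rfl⟩
        simpa using a.2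
    rw [hmap, Finset.card_map, Finset.card_univ, Fintype.card_fin]
  have hfilter1 : Finset.univ.filter (fun i : Fin n => (c i).length = m)
      = Finset.univ.filter (fun i : Fin n => (i:ℕ) < k) := by
    ext i
    by_cases hi : (i:ℕ) < k <;> simp [hclen i, hi]
  have hfilter2 : Finset.univ.filter (fun i : Fin n => (c i).length = m + 1)
      = Finset.univ.filter (fun i : Fin n => ¬ (i:ℕ) < k) := by
    ext i
    by_cases hi : (i:ℕ) < k <;> simp [hclen i, hi] <;> omega
  have hcards := Finset.card_filter_add_card_filter_not
    (s := Finset.univ) (p := fun i : Fin n => (i:ℕ) < k)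
  have hcards' : (Finset.univ.filter (fun i : Fin n => (i:ℕ) < k)).card
      + (Finset.univ.filter (fun i : Fin n => ¬ (i:ℕ) < k)).card = n := by
    simpa using hcards
  have hcard2 : (Finset.univ.filter (fun i : Fin n => ¬ (i:ℕ) < k)).card = n - k := by omega
  -- sum of lengths
  set Sn : ℕ := ∑ i, (c i).length with hSn
  have hSnval : Sn = k * m + (n - k) * (m + 1) := by
    rw [hSn, ← Finset.sum_filter_add_sum_filter_not Finset.univ (fun i : Fin n => (i:ℕ) < k)]
    have t1 : ∑ i ∈ Finset.univ.filter (fun i : Fin n => (i:ℕ) < k), (c i).length = k * m := by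
      rw [Finset.sum_congr rfl (fun i hi => by
        rw [hclen i, if_pos (Finset.mem_filter.mp hi).2])]
      rw [Finset.sum_const, hcard1, smul_eq_mul]
    have t2 : ∑ i ∈ Finset.univ.filter (fun i : Fin n => ¬ (i:ℕ) < k), (c i).length
        = (n - k) * (m + 1) := by
      rw [Finset.sum_congr rfl (fun i hi => by
        rw [hclen i, if_neg (Finset.mem_filter.mp hi).2])]
      rw [Finset.sum_const, hcard2, smul_eq_mul]
    rw [t1, t2]
  have hSnz : (Sn : ℤ) = (n:ℤ) * (m+1) - k := by
    rw [hSnval]; push_cast [Nat.cast_sub hkn]; ring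
  have hexp : expLen (unif n) c = (Sn : ℝ) / n := by
    have h1 : ((Sn : ℕ) : ℝ) = ∑ i, ((c i).length : ℝ) := by rw [hSn]; push_cast; rfl
    rw [expLen, h1, Finset.sum_div]
    exact Finset.sum_congr rfl (fun i _ => by simp only [unif]; ring)
  -- lower bound for any prefix code
  have hlb : ∀ c' : Fin n → List (Fin D), IsPrefixCode c' →
      expLen (unif n) c ≤ expLen (unif n) c' := by
    intro c' hc'
    set Sn' : ℕ := ∑ i, (c' i).length with hSn'
    have hkraft := kraft_real hD c' hc'
    have hper : ∀ i : Fin n, ((D:ℝ)-1) * ((m+1 : ℝ) - ((c' i).length : ℝ))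
        ≤ (D:ℝ)^(((m+1 : ℤ)) - ((c' i).length : ℤ)) - 1 := by
      intro i
      have hb := bern (D:ℝ) (by exact_mod_cast hD) ((m+1 : ℤ) - ((c' i).length : ℤ))
      have hcast : ((((m+1 : ℤ) - ((c' i).length : ℤ)) : ℤ) : ℝ)
          = (m+1:ℝ) - ((c' i).length : ℝ) := by push_cast; ring
      rw [hcast] at hb
      exact hb
    have hstep : ((D:ℝ)-1) * ((n:ℝ)*(m+1) - Sn') ≤ (D:ℝ)^(m+1) - n := by
      calc ((D:ℝ)-1) * ((n:ℝ)*(m+1) - Sn')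
          = ∑ i : Fin n, ((D:ℝ)-1) * ((m+1:ℝ) - ((c' i).length : ℝ)) := by
            rw [← Finset.mul_sum]
            congr 1
            rw [Finset.sum_sub_distrib, Finset.sum_const, Finset.card_univ, Fintype.card_fin]
            have : ((Sn' : ℕ) : ℝ) = ∑ i : Fin n, ((c' i).length : ℝ) := by
              rw [hSn']; push_cast; rfl
            rw [← this]
            push_cast
            ring
        _ ≤ ∑ i : Fin n, ((D:ℝ)^((m+1:ℤ) - ((c' i).length:ℤ)) - 1) :=
            Finset.sum_le_sum (fun i _ => hper i)
        _ = (D:ℝ)^(m+1) * (∑ i, (D:ℝ)^(-((c' i).length:ℤ))) - n := by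
            rw [Finset.sum_sub_distrib, Finset.sum_const, Finset.card_univ, Fintype.card_fin,
              Finset.mul_sum, nsmul_eq_mul, mul_one]
            congr 1
            apply Finset.sum_congr rfl
            intro i _
            rw [← zpow_natCast (D:ℝ) (m+1), ← zpow_add₀ hD0']
            congr 1
        _ ≤ (D:ℝ)^(m+1) * 1 - n := by
            have hp1 : (0:ℝ) < (D:ℝ)^(m+1) := by positivity
            nlinarith [hkraft]
        _ = (D:ℝ)^(m+1) - n := by ring
    have hstepz : ((D:ℤ)-1) * ((n:ℤ)*(m+1) - Sn') ≤ (D:ℤ)^(m+1) - n := by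
      exact_mod_cast hstep
    have hTk : (n:ℤ)*(m+1) - Sn' ≤ k := by
      by_contra hcon
      push_neg at hcon
      have hkk : ((k:ℤ) + 1) ≤ (n:ℤ)*(m+1) - Sn' := by omega
      have := mul_le_mul_of_nonneg_left hkk (by omega : (0:ℤ) ≤ (D:ℤ) - 1)
      linarith
    have hSS : (Sn : ℤ) ≤ (Sn' : ℤ) := by omega
    have hSSr : (Sn : ℝ) ≤ (Sn' : ℝ) := by exact_mod_cast hSS
    have hexp' : expLen (unif n) c' = (Sn' : ℝ) / n := by
      have h1 : ((Sn' : ℕ) : ℝ) = ∑ i, ((c' i).length : ℝ) := by rw [hSn']; push_cast; rfl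
      rw [expLen, h1, Finset.sum_div]
      exact Finset.sum_congr rfl (fun i _ => by simp only [unif]; ring)
    rw [hexp, hexp']
    gcongr
  -- conclusion
  refine ⟨c, hc, by rw [hfilter1, hcard1], by rw [hfilter2, hcard2], ?_⟩
  have hleast : IsLeast {x : ℝ | ∃ c' : Fin n → List (Fin D), IsPrefixCode c' ∧ x = expLen (unif n) c'}
      (expLen (unif n) c) := by
    constructor
    · exact ⟨c, hc, rfl⟩
    · rintro x ⟨c', hc', rfl⟩
      exact hlb c' hc'
  rw [minExpLen]
  exact (hleast.csInf_eq).symm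
end

section
/- Let D ≥ 2 and n ≥ 2, and let m be the unique natural number with D^m ≤ n < D^{m+1}. Let k = D^m − ⌈(n − D^m)/(D − 1)⌉, where the ceiling is taken over the rationals. Let P be a PMF on n symbols whose entries are sorted nonincreasingly (P i ≥ P j whenever i ≤ j), and suppose P is a point of maximum, i.e. L_D(P) = L_D(U_n). Define lengths l : Fin n → ℕ by l i = m for i < k and l i = m + 1 for i ≥ k. Then ∑ i, P i * l i = L_D(P); that is, the optimal length sequence of the uniform distribution is also an optimal length sequence for P. -/
/-! The code giving the first `k` symbols the length `m` and the others the length `m + 1` is a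
prefix code, because the `D ^ m - k` unused words of length `m` have enough one-letter extensions.
No prefix code has smaller total length: by Kraft–McMillan `∑ D ^ (-lᵢ) ≤ 1`, and the integer
Bernoulli inequality `(D - 1) l + D ^ (m + 1 - l) ≥ (D - 1) m + D` turns this into a lower bound
on `∑ lᵢ` whose integer rounding is exactly `n m + (n - k)`. Hence the code is optimal for the
uniform distribution. As `P` is nonincreasing and the lengths are nondecreasing, Chebyshev's sum
inequality gives `E_P ≤ E_U` for this code, so `E_P ≤ L(U) = L(P) ≤ E_P`. -/

open Finset InformationTheory

theorem uniquelyDecodable_of_prefixFree {α : Type*} {S : Set (List α)} (hnil : [] ∉ S)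
    (hS : ∀ a ∈ S, ∀ b ∈ S, a <+: b → a = b) : UniquelyDecodable S := by
  have hne : ∀ w ∈ S, ∀ L, [] ≠ w ++ L := fun w hw L h =>
    hnil (List.append_eq_nil_iff.1 h.symm |>.1 ▸ hw)
  intro L₁
  induction L₁ with
  | nil =>
    rintro (_ | ⟨w, L₂⟩) - h₂ h
    · rfl
    · exact absurd h (hne w (h₂ w (by simp)) _)
  | cons w₁ L₁ ih =>
    rintro (_ | ⟨w₂, L₂⟩) h₁ h₂ h
    · exact absurd h.symm (hne w₁ (h₁ w₁ (by simp)) _)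
    · simp only [List.flatten_cons] at h
      have hw₁ := h₁ w₁ (by simp)
      have hw₂ := h₂ w₂ (by simp)
      obtain rfl : w₁ = w₂ := by
        rcases List.prefix_or_prefix_of_prefix (List.prefix_append w₁ _)
          (h ▸ List.prefix_append w₂ _) with hp | hp
        · exact hS _ hw₁ _ hw₂ hp
        · exact (hS _ hw₂ _ hw₁ hp).symm
      rw [ih L₂ (fun w hw => h₁ w (by simp [hw])) (fun w hw => h₂ w (by simp [hw]))
        (List.append_cancel_left h)]

section PrefixCode

variable {D n : ℕ} {c : Fin n → List (Fin D)}

theorem IsPrefixCode.sum_one_div_pow_length_le_one [NeZero D] (hc : IsPrefixCode c) :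
    ∑ i, (1 / (D : ℝ)) ^ (c i).length ≤ 1 := by
  rcases le_or_gt n 1 with hn | hn
  · have hD : 1 / (D : ℝ) ≤ 1 :=
      div_le_one_of_le₀ (by exact_mod_cast NeZero.one_le) (by positivity)
    calc ∑ i, (1 / (D : ℝ)) ^ (c i).length ≤ ∑ _i : Fin n, (1 : ℝ) :=
          sum_le_sum fun i _ => pow_le_one₀ (by positivity) hD
      _ ≤ 1 := by simpa using (show (n : ℝ) ≤ 1 by exact_mod_cast hn)
  have hnil : [] ∉ Set.range c := by
    rintro ⟨i, hi⟩
    have : Nontrivial (Fin n) := Fin.nontrivial_iff_two_le.2 hn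
    obtain ⟨j, hj⟩ := exists_ne i
    exact hc.2 i j hj.symm (hi ▸ List.nil_prefix)
  have hud : UniquelyDecodable (Set.range c) := by
    refine uniquelyDecodable_of_prefixFree hnil ?_
    rintro _ ⟨i, rfl⟩ _ ⟨j, rfl⟩ h
    by_cases hij : i = j
    · rw [hij]
    · exact absurd h (hc.2 i j hij)
  have := kraft_mcmillan_inequality (S := univ.image c) (by simpa using hud)
  rwa [sum_image fun i _ j _ h => hc.1 h, Fintype.card_fin] at this

end PrefixCode

theorem sub_one_mul_add_le_sub_one_mul_add_pow_div_pow {d : ℝ} (hd : 2 ≤ d) (m l : ℕ) :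
    (d - 1) * m + d ≤ (d - 1) * l + d ^ (m + 1) / d ^ l := by
  rcases le_or_gt l (m + 1) with hl | hl
  · obtain ⟨j, hj⟩ := Nat.exists_eq_add_of_le hl
    have hjR : (m : ℝ) + 1 = l + j := by exact_mod_cast hj
    rw [hj, pow_add, mul_div_cancel_left₀ _ (by positivity)]
    have := one_add_mul_le_pow (by linarith : -2 ≤ d - 1) j
    rw [add_sub_cancel] at this
    linear_combination this + (d - 1) * hjR
  · have hlR : (m : ℝ) + 2 ≤ l := by exact_mod_cast hl
    have : 0 ≤ d ^ (m + 1) / d ^ l := by positivity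
    nlinarith

theorem card_mul_le_sub_one_mul_sum_add_pow_of_kraft {ι : Type*} [Fintype ι] {d : ℝ}
    (hd : 2 ≤ d) (m : ℕ) (l : ι → ℕ) (hl : ∑ i, (1 / d) ^ l i ≤ 1) :
    Fintype.card ι * ((d - 1) * m + d) ≤ (d - 1) * ∑ i, (l i : ℝ) + d ^ (m + 1) := by
  calc (Fintype.card ι : ℝ) * ((d - 1) * m + d)
      = ∑ _i : ι, ((d - 1) * m + d) := by rw [sum_const, card_univ, nsmul_eq_mul]
    _ ≤ ∑ i, ((d - 1) * l i + d ^ (m + 1) * (1 / d) ^ l i) := by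
      refine sum_le_sum fun i _ => ?_
      rw [one_div_pow, mul_one_div]
      exact sub_one_mul_add_le_sub_one_mul_add_pow_div_pow hd m (l i)
    _ = (d - 1) * ∑ i, (l i : ℝ) + d ^ (m + 1) * ∑ i, (1 / d) ^ l i := by
      rw [sum_add_distrib, mul_sum, mul_sum]
    _ ≤ (d - 1) * ∑ i, (l i : ℝ) + d ^ (m + 1) := by
      gcongr
      exact mul_le_of_le_one_right (by positivity) hl

theorem toNat_ceil_natCast_div_natCast_eq_ceilDiv {K : Type*} [Field K] [LinearOrder K]
    [IsStrictOrderedRing K] [FloorRing K] (N d : ℕ) :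
    (⌈(N : K) / d⌉).toNat = N ⌈/⌉ d := by
  rcases d.eq_zero_or_pos with rfl | hd
  · simp
  refine eq_of_forall_ge_iff fun t => ?_
  rw [Int.toNat_le, Int.ceil_le, div_le_iff₀ (by exact_mod_cast hd), ceilDiv_le_iff_le_mul hd]
  norm_cast
  rw [mul_comm]

theorem sub_pow_ceilDiv_sub_one_le_pow {D n m : ℕ} (hD : 2 ≤ D) (hn : n < D ^ (m + 1)) :
    (n - D ^ m) ⌈/⌉ (D - 1) ≤ D ^ m := by
  rw [ceilDiv_le_iff_le_mul (by omega), Nat.sub_one_mul, ← pow_succ']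
  omega

theorem add_ceilDiv_sub_one_le_mul_ceilDiv {D : ℕ} (hD : 2 ≤ D) (N : ℕ) :
    N + N ⌈/⌉ (D - 1) ≤ D * (N ⌈/⌉ (D - 1)) := by
  have h := le_smul_ceilDiv (b := N) (by omega : 0 < D - 1)
  rw [smul_eq_mul, Nat.sub_one_mul] at h
  have := Nat.le_mul_of_pos_left (N ⌈/⌉ (D - 1)) (by omega : 0 < D)
  omega

theorem IsPrefixCode.add_ceilDiv_le_sum_length {D n m : ℕ} {c : Fin n → List (Fin D)}
    (hc : IsPrefixCode c) (hD : 2 ≤ D) (hm : D ^ m ≤ n) :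
    n * m + (n - D ^ m) + (n - D ^ m) ⌈/⌉ (D - 1) ≤ ∑ i, (c i).length := by
  have : NeZero D := ⟨by omega⟩
  have hkraft := card_mul_le_sub_one_mul_sum_add_pow_of_kraft (d := D) (by exact_mod_cast hD) m
    (fun i => (c i).length) hc.sum_one_div_pow_length_le_one
  obtain ⟨N, rfl⟩ := Nat.exists_eq_add_of_le hm
  obtain ⟨d, rfl⟩ := Nat.exists_eq_add_of_le' (by omega : 1 ≤ D)
  set S := ∑ i, (c i).length
  simp only [Fintype.card_fin, add_tsub_cancel_right, Nat.add_sub_cancel_left] at hkraft ⊢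
  push_cast [pow_succ] at hkraft
  have hS : d * ((d + 1) ^ m + N) * m + (d + 1) * N ≤ d * S := by
    have hSR : (S : ℝ) = ∑ i, ((c i).length : ℝ) := by push_cast [S]; rfl
    rw [← hSR, add_sub_cancel_right] at hkraft
    exact_mod_cast (by linear_combination hkraft :
      (d : ℝ) * ((d + 1) ^ m + N) * m + (d + 1) * N ≤ d * S)
  have hd : 0 < d := by omega
  have hle : ((d + 1) ^ m + N) * m + N ≤ S := by
    refine Nat.le_of_mul_le_mul_left ?_ hd
    linarith
  obtain ⟨T, hT⟩ := Nat.exists_eq_add_of_le hle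
  rw [hT] at hS ⊢
  have : N ≤ d * T := by linarith
  have := (ceilDiv_le_iff_le_mul hd).2 this
  omega

section TwoLevelCode

variable (D : ℕ) [NeZero D]

/-- The base-`D` digits of `v`, least significant first, truncated or padded to length `m`. -/
def digitWord (m v : ℕ) : List (Fin D) :=
  List.ofFn fun t : Fin m => Fin.ofNat D (v / D ^ (t : ℕ))

theorem length_digitWord (m v : ℕ) : (digitWord D m v).length = m :=
  List.length_ofFn

theorem digitWord_injOn (m : ℕ) : Set.InjOn (digitWord D m) (Set.Iio (D ^ m)) := by
  have key : ∀ v (hv : v < D ^ m),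
      digitWord D m v = List.ofFn (finFunctionFinEquiv.symm ⟨v, hv⟩) :=
    fun v hv => congrArg List.ofFn <| funext fun t => Fin.ext <| by
      rw [Fin.val_ofNat, finFunctionFinEquiv_symm_apply_val]
  intro v hv w hw h
  rw [key v hv, key w hw] at h
  exact congrArg Fin.val (finFunctionFinEquiv.symm.injective (List.ofFn_injective h))

/-- The first `k` symbols get the words of length `m` of value `< k`; the remaining ones get the
one-letter extensions of the other words of length `m`, `D` extensions per word. -/
def twoLevelCode (m k i : ℕ) : List (Fin D) :=
  if i < k then digitWord D m i else digitWord D m (k + (i - k) / D) ++ [Fin.ofNat D (i - k)]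

variable {D}

theorem length_twoLevelCode (m k i : ℕ) :
    (twoLevelCode D m k i).length = if i < k then m else m + 1 := by
  unfold twoLevelCode
  split_ifs <;> simp [length_digitWord]

theorem eq_of_twoLevelCode_prefix {n m k i j : ℕ} (hk : k ≤ D ^ m)
    (hcap : n - k ≤ D * (D ^ m - k)) (hi : i < n) (hj : j < n)
    (h : twoLevelCode D m k i <+: twoLevelCode D m k j) : i = j := by
  have hlong : ∀ i < n, k ≤ i → k + (i - k) / D < D ^ m := fun i hi hki => by
    have : (i - k) / D < D ^ m - k := Nat.div_lt_of_lt_mul (by omega)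
    omega
  unfold twoLevelCode at h
  split_ifs at h with hik hjk hjk
  · exact digitWord_injOn D m (by simp; omega) (by simp; omega)
      (h.eq_of_length (by simp [length_digitWord]))
  · have := digitWord_injOn D m (by simp; omega) (hlong j hj (by omega))
      ((List.prefix_of_prefix_length_le h (List.prefix_append _ _)
        (by simp [length_digitWord])).eq_of_length (by simp [length_digitWord]))
    have := Nat.le_add_right k ((j - k) / D)
    omega
  · have := h.length_le
    simp [length_digitWord] at this
  · obtain ⟨hw, hx⟩ := List.append_inj' (h.eq_of_length (by simp [length_digitWord])) rfl
    have hq := digitWord_injOn D m (hlong i hi (by omega)) (hlong j hj (by omega)) hw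
    have hr : (i - k) % D = (j - k) % D := by simpa [Fin.ext_iff] using hx
    have hi' := Nat.div_add_mod (i - k) D
    have hj' := Nat.div_add_mod (j - k) D
    rw [show (i - k) / D = (j - k) / D by omega, hr] at hi'
    omega

theorem isPrefixCode_twoLevelCode {n m k : ℕ} (hk : k ≤ D ^ m)
    (hcap : n - k ≤ D * (D ^ m - k)) : IsPrefixCode fun i : Fin n => twoLevelCode D m k i :=
  ⟨fun i j h => Fin.ext <| eq_of_twoLevelCode_prefix hk hcap i.2 j.2 <| by
      rw [show twoLevelCode D m k i = _ from h],
    fun i j hij h => hij (Fin.ext (eq_of_twoLevelCode_prefix hk hcap i.2 j.2 h))⟩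

theorem sum_length_twoLevelCode {n m k : ℕ} (hkn : k ≤ n) :
    ∑ i : Fin n, (twoLevelCode D m k i).length = n * m + (n - k) := by
  rw [Fin.sum_univ_eq_sum_range (fun i => (twoLevelCode D m k i).length),
    ← sum_range_add_sum_Ico _ hkn,
    sum_congr (s₁ := range k) rfl (g := fun _ => m) fun i hi => by
      rw [length_twoLevelCode, if_pos (mem_range.1 hi)],
    sum_congr (s₁ := Ico k n) rfl (g := fun _ => m + 1) fun i hi => by
      rw [length_twoLevelCode, if_neg (mem_Ico.1 hi).1.not_gt]]
  simp only [sum_const, card_range, Nat.card_Ico, smul_eq_mul]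
  obtain ⟨j, rfl⟩ := Nat.exists_eq_add_of_le hkn
  rw [Nat.add_sub_cancel_left]
  ring

end TwoLevelCode

section ExpectedLength

variable {D n : ℕ} {P : Fin n → ℝ}

theorem minExpLen_le_expLen (hP : ∀ i, 0 ≤ P i) {c : Fin n → List (Fin D)}
    (hc : IsPrefixCode c) : minExpLen D P ≤ expLen P c :=
  csInf_le ⟨0, by
    rintro _ ⟨c', -, rfl⟩
    exact sum_nonneg fun i _ => mul_nonneg (hP i) (Nat.cast_nonneg _)⟩ ⟨c, hc, rfl⟩

theorem le_minExpLen {x : ℝ} {c : Fin n → List (Fin D)} (hc : IsPrefixCode c)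
    (h : ∀ c' : Fin n → List (Fin D), IsPrefixCode c' → x ≤ expLen P c') :
    x ≤ minExpLen D P :=
  le_csInf ⟨_, c, hc, rfl⟩ fun _ ⟨c', hc', hx⟩ => hx ▸ h c' hc'

theorem expLen_unif_le_expLen_unif {c c' : Fin n → List (Fin D)}
    (h : ∑ i, (c i).length ≤ ∑ i, (c' i).length) : expLen (unif n) c ≤ expLen (unif n) c' := by
  simp only [expLen, unif, one_div_mul_eq_div, ← sum_div]
  exact div_le_div_of_nonneg_right (by exact_mod_cast h) (Nat.cast_nonneg _)

theorem sum_mul_le_sum_unif_mul (hP : ∑ i, P i = 1) (hPa : Antitone P) {l : Fin n → ℝ}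
    (hl : Monotone l) : ∑ i, P i * l i ≤ ∑ i, unif n i * l i := by
  have h := (hPa.antivary hl).card_mul_sum_le_sum_mul_sum
  rw [hP, one_mul, Fintype.card_fin] at h
  rcases n.eq_zero_or_pos with rfl | hn
  · simp
  simp only [unif, one_div_mul_eq_div, ← sum_div]
  rwa [le_div_iff₀ (by positivity), mul_comm]

end ExpectedLength

theorem stmt_10_general (D n m : ℕ) (hD : 2 ≤ D)
    (hm : D ^ m ≤ n) (hm' : n < D ^ (m + 1))
    (k : ℕ) (hk : k = D ^ m - (⌈((n - D ^ m : ℕ) : ℚ) / ((D : ℚ) - 1)⌉).toNat)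
    (P : Fin n → ℝ) (hP : IsPMF P)
    (hsorted : ∀ i j : Fin n, i ≤ j → P j ≤ P i)
    (hmax : minExpLen D P = minExpLen D (unif n)) :
    ∑ i : Fin n, P i * (((if (i : ℕ) < k then m else m + 1) : ℕ) : ℝ) = minExpLen D P := by
  have : NeZero D := ⟨by omega⟩
  rw [← Nat.cast_pred (by omega), toNat_ceil_natCast_div_natCast_eq_ceilDiv] at hk
  have hr := sub_pow_ceilDiv_sub_one_le_pow hD hm'
  have hcap : n - k ≤ D * (D ^ m - k) := by
    have := add_ceilDiv_sub_one_le_mul_ceilDiv hD (n - D ^ m)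
    rw [hk, Nat.sub_sub_self hr]
    omega
  set c := fun i : Fin n => twoLevelCode D m k i
  have hc : IsPrefixCode c := isPrefixCode_twoLevelCode (by omega) hcap
  have hlen : ∀ i : Fin n, (c i).length = if (i : ℕ) < k then m else m + 1 :=
    fun i => length_twoLevelCode m k i
  have hsum : ∑ i, (c i).length = n * m + (n - k) := sum_length_twoLevelCode (by omega)
  simp only [← hlen]
  refine le_antisymm ?_ (minExpLen_le_expLen (fun i => (hP.1 i).le) hc)
  calc expLen P c ≤ expLen (unif n) c :=
        sum_mul_le_sum_unif_mul hP.2 (fun i j hij => hsorted i j hij) fun i j hij =>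
          Nat.cast_le.2 <| by simp only [hlen]; split_ifs <;> omega
    _ ≤ minExpLen D (unif n) := le_minExpLen hc fun c' hc' => expLen_unif_le_expLen_unif <| by
        have := hc'.add_ceilDiv_le_sum_length hD hm
        omega
    _ = minExpLen D P := hmax.symm

/-- If a nonincreasing PMF P is a point of maximum, then the optimal
length sequence of the uniform distribution (k lengths m and n − k lengths m + 1)
achieves the minimum expected length of P. -/
theorem stmt_10 (D n m : ℕ) (hD : 2 ≤ D) (hn : 2 ≤ n)
    (hm : D ^ m ≤ n) (hm' : n < D ^ (m + 1))
    (k : ℕ) (hk : k = D ^ m - (⌈((n - D ^ m : ℕ) : ℚ) / ((D : ℚ) - 1)⌉).toNat)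
    (P : Fin n → ℝ) (hP : IsPMF P)
    (hsorted : ∀ i j : Fin n, i ≤ j → P j ≤ P i)
    (hmax : minExpLen D P = minExpLen D (unif n)) :
    ∑ i : Fin n, P i * (((if (i : ℕ) < k then m else m + 1) : ℕ) : ℝ) = minExpLen D P :=
  stmt_10_general D n m hD hm hm' k hk P hP hsorted hmax
end
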